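/- Let P be a transition matrix on 𝒳. Then: (i) (symmetry) for every α ∈ (0,1), η^{(R_α)}(P) = η^{(R_{1−α})}(P) and η^{(D_α)}(P) = η^{(D_{1−α})}(P); (ii) (equivalence) for 0 < α < β < 1, (α/β)·((1−β)/(1−α)) · η^{(R_β)}(P) ≤ η^{(R_α)}(P) ≤ (β/α)·((1−α)/(1−β)) · η^{(R_β)}(P). -/

import Mathlib

/-!
Everything is expressed through the Chernoff coefficient
`T_γ(M, L) = ∑ₓ π x ∑_y M(x,y)^γ L(x,y)^(1-γ)`: for `γ ∈ (0,1)` one has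
`D_γ = (T_γ - 1)/(γ - 1)` and `R_γ = -log T_γ / (1 - γ)`.

Symmetry: `T_{1-γ}(L, M) = T_γ(M, L)`, so `D_{1-γ}(L, M)` and `R_{1-γ}(L, M)` are the fixed
positive multiple `(1-γ)/γ` of `D_γ(M, L)` and `R_γ(M, L)`; swapping `M` and `L` therefore maps
the set of contraction ratios of order `γ` onto that of order `1 - γ`.

Equivalence: by Hölder, `γ ↦ T_γ` is log-convex with `T_0 = T_1 = 1`, which gives
`(α/β)((1-β)/(1-α)) R_β ≤ R_α ≤ R_β`. Applied to `(M, L)` and to `(MP, LP)` this compares the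
ratios of orders `α` and `β` within that factor. Hölder also gives the data-processing inequality
`T_γ(M, L) ≤ T_γ(MP, LP)`, so all Rényi ratios lie in `[0, 1]` and the suprema are genuine.
-/

open Finset

/-- A transition matrix on a finite state space `X`: nonnegative entries, rows sum to one. -/
def IsTransMat {X : Type*} [Fintype X] (M : X → X → ℝ) : Prop :=
  (∀ x y, 0 ≤ M x y) ∧ ∀ x, ∑ y, M x y = 1

/-- The π-weighted α-divergence between transition matrices (for `α ∈ (0,1)` a term with
`L x y = 0` contributes `0`, which the formula realises since `a / 0 = 0` and `0 ^ α = 0`). -/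
noncomputable def Dalpha {X : Type*} [Fintype X] (π : X → ℝ) (α : ℝ) (M L : X → X → ℝ) : ℝ :=
  (1 / (α - 1)) * ((∑ x, ∑ y, π x * L x y * (M x y / L x y) ^ α) - 1)

/-- The π-weighted Rényi divergence between transition matrices. -/
noncomputable def Ralpha {X : Type*} [Fintype X] (π : X → ℝ) (α : ℝ) (M L : X → X → ℝ) : ℝ :=
  (1 / (α - 1)) * Real.log (1 + (α - 1) * Dalpha π α M L)

/-- Matrix product of transition matrices. -/
def matMul {X : Type*} [Fintype X] (M P : X → X → ℝ) : X → X → ℝ :=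
  fun x y => ∑ z, M x z * P z y

/-- The α-divergence ergodicity coefficient on the space of transition matrices. -/
noncomputable def etaD {X : Type*} [Fintype X] (π : X → ℝ) (α : ℝ) (P : X → X → ℝ) : ℝ :=
  sSup {r : ℝ | ∃ M L : X → X → ℝ, IsTransMat M ∧ IsTransMat L ∧ M ≠ L ∧
    0 < Dalpha π α M L ∧
    r = Dalpha π α (matMul M P) (matMul L P) / Dalpha π α M L}

/-- The Rényi ergodicity coefficient on the space of transition matrices. -/
noncomputable def etaR {X : Type*} [Fintype X] (π : X → ℝ) (α : ℝ) (P : X → X → ℝ) : ℝ :=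
  sSup {r : ℝ | ∃ M L : X → X → ℝ, IsTransMat M ∧ IsTransMat L ∧ M ≠ L ∧
    0 < Ralpha π α M L ∧
    r = Ralpha π α (matMul M P) (matMul L P) / Ralpha π α M L}

theorem Real.sum_rpow_mul_rpow_one_sub_le {ι : Type*} (s : Finset ι) {f g : ι → ℝ}
    (hf : ∀ i ∈ s, 0 ≤ f i) (hg : ∀ i ∈ s, 0 ≤ g i) {t : ℝ} (ht : t ∈ Set.Ioo 0 1) :
    ∑ i ∈ s, f i ^ t * g i ^ (1 - t) ≤ (∑ i ∈ s, f i) ^ t * (∑ i ∈ s, g i) ^ (1 - t) := by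
  have h := Real.inner_le_Lp_mul_Lq_of_nonneg s
    (Real.holderConjugate_one_div ht.1 (sub_pos.2 ht.2) (by ring))
    (fun i hi => Real.rpow_nonneg (hf i hi) t) (fun i hi => Real.rpow_nonneg (hg i hi) (1 - t))
  have rpow_one_div_cancel : ∀ {x u : ℝ}, 0 ≤ x → u ≠ 0 → (x ^ u) ^ (1 / u) = x :=
    fun hx hu => by rw [← Real.rpow_mul hx, mul_one_div_cancel hu, Real.rpow_one]
  rwa [one_div_one_div, one_div_one_div,
    sum_congr rfl fun i hi => rpow_one_div_cancel (hf i hi) ht.1.ne',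
    sum_congr rfl fun i hi => rpow_one_div_cancel (hg i hi) (sub_pos.2 ht.2).ne'] at h

theorem Real.mul_div_rpow_eq_rpow_mul_rpow_one_sub {m l γ : ℝ} (hm : 0 ≤ m) (hl : 0 ≤ l)
    (hγ : γ ≠ 1) : l * (m / l) ^ γ = m ^ γ * l ^ (1 - γ) := by
  rcases hl.eq_or_lt with rfl | hl
  · rw [Real.zero_rpow (sub_ne_zero.2 hγ.symm), zero_mul, mul_zero]
  · rw [Real.div_rpow hm hl.le, Real.rpow_sub hl, Real.rpow_one]
    field_simp

theorem Real.mul_rpow_mul_rpow_one_sub_le {w a b γ γ₁ γ₂ t : ℝ} (hw : 0 ≤ w) (ha : 0 ≤ a)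
    (hb : 0 ≤ b) (hγ : γ ∈ Set.Ioo 0 1) (hγt : γ = t * γ₁ + (1 - t) * γ₂) :
    w * (a ^ γ * b ^ (1 - γ)) ≤
      (w * (a ^ γ₁ * b ^ (1 - γ₁))) ^ t * (w * (a ^ γ₂ * b ^ (1 - γ₂))) ^ (1 - t) := by
  have hrhs : 0 ≤ (w * (a ^ γ₁ * b ^ (1 - γ₁))) ^ t * (w * (a ^ γ₂ * b ^ (1 - γ₂))) ^ (1 - t) := by
    positivity
  rcases hw.eq_or_lt with rfl | hw
  · simpa using hrhs
  rcases ha.eq_or_lt with rfl | ha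
  · simpa [Real.zero_rpow hγ.1.ne'] using hrhs
  rcases hb.eq_or_lt with rfl | hb
  · simpa [Real.zero_rpow (sub_pos.2 hγ.2).ne'] using hrhs
  -- for positive `w, a, b` both sides are `exp` of the same affine expression in the exponents
  obtain ⟨p, rfl⟩ : ∃ p, w = Real.exp p := ⟨_, (Real.exp_log hw).symm⟩
  obtain ⟨q, rfl⟩ : ∃ q, a = Real.exp q := ⟨_, (Real.exp_log ha).symm⟩
  obtain ⟨r, rfl⟩ : ∃ r, b = Real.exp r := ⟨_, (Real.exp_log hb).symm⟩
  simp only [← Real.exp_mul, ← Real.exp_add]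
  exact le_of_eq (congrArg Real.exp (by rw [hγt]; ring))

section

variable {X : Type*} [Fintype X] {π : X → ℝ} {M L P : X → X → ℝ} {α β γ : ℝ}

theorem IsTransMat.matMul (hM : IsTransMat M) (hP : IsTransMat P) :
    IsTransMat (_root_.matMul M P) := by
  refine ⟨fun x y => sum_nonneg fun z _ => mul_nonneg (hM.1 x z) (hP.1 z y), fun x => ?_⟩
  simp only [_root_.matMul]
  rw [sum_comm]
  simp only [← mul_sum, hP.2, mul_one, hM.2]

noncomputable def chernoffCoeff (π : X → ℝ) (γ : ℝ) (M L : X → X → ℝ) : ℝ :=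
  ∑ x, π x * ∑ y, M x y ^ γ * L x y ^ (1 - γ)

theorem chernoffCoeff_nonneg (hπ : ∀ x, 0 ≤ π x) (hM : ∀ x y, 0 ≤ M x y)
    (hL : ∀ x y, 0 ≤ L x y) : 0 ≤ chernoffCoeff π γ M L :=
  sum_nonneg fun x _ => mul_nonneg (hπ x) <| sum_nonneg fun y _ => by
    have := hM x y; have := hL x y; positivity

theorem chernoffCoeff_swap : chernoffCoeff π (1 - γ) L M = chernoffCoeff π γ M L := by
  simp only [chernoffCoeff, sub_sub_cancel]
  exact sum_congr rfl fun x _ => congrArg _ (sum_congr rfl fun y _ => mul_comm _ _)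

theorem chernoffCoeff_one (hπ1 : ∑ x, π x = 1) (hM : IsTransMat M) :
    chernoffCoeff π 1 M L = 1 := by
  simp [chernoffCoeff, hM.2, hπ1]

theorem chernoffCoeff_zero (hπ1 : ∑ x, π x = 1) (hL : IsTransMat L) :
    chernoffCoeff π 0 M L = 1 := by
  simp [chernoffCoeff, hL.2, hπ1]

theorem chernoffCoeff_le_one (hπ : ∀ x, 0 ≤ π x) (hπ1 : ∑ x, π x = 1) (hM : IsTransMat M)
    (hL : IsTransMat L) (hγ : γ ∈ Set.Ioo 0 1) : chernoffCoeff π γ M L ≤ 1 := by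
  have row_le_one : ∀ x, ∑ y, M x y ^ γ * L x y ^ (1 - γ) ≤ 1 := fun x => by
    simpa [hM.2, hL.2] using Real.sum_rpow_mul_rpow_one_sub_le univ
      (fun y _ => hM.1 x y) (fun y _ => hL.1 x y) hγ
  calc chernoffCoeff π γ M L ≤ ∑ x, π x * 1 :=
        sum_le_sum fun x _ => mul_le_mul_of_nonneg_left (row_le_one x) (hπ x)
    _ = 1 := by simp [hπ1]

theorem chernoffCoeff_le_rpow_mul_rpow (hπ : ∀ x, 0 ≤ π x) (hM : ∀ x y, 0 ≤ M x y)
    (hL : ∀ x y, 0 ≤ L x y) {γ₁ γ₂ t : ℝ} (ht : t ∈ Set.Ioo 0 1) (hγ : γ ∈ Set.Ioo 0 1)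
    (hγt : γ = t * γ₁ + (1 - t) * γ₂) :
    chernoffCoeff π γ M L ≤ chernoffCoeff π γ₁ M L ^ t * chernoffCoeff π γ₂ M L ^ (1 - t) := by
  have sum_pairs : ∀ γ, chernoffCoeff π γ M L =
      ∑ p : X × X, π p.1 * (M p.1 p.2 ^ γ * L p.1 p.2 ^ (1 - γ)) := fun γ => by
    simp only [chernoffCoeff, mul_sum, Fintype.sum_prod_type]
  have term_nonneg : ∀ (γ : ℝ) (p : X × X), 0 ≤ π p.1 * (M p.1 p.2 ^ γ * L p.1 p.2 ^ (1 - γ)) :=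
    fun γ p => by have := hπ p.1; have := hM p.1 p.2; have := hL p.1 p.2; positivity
  rw [sum_pairs, sum_pairs, sum_pairs]
  exact (sum_le_sum fun p _ => Real.mul_rpow_mul_rpow_one_sub_le (hπ p.1) (hM p.1 p.2)
    (hL p.1 p.2) hγ hγt).trans <| Real.sum_rpow_mul_rpow_one_sub_le _
      (fun p _ => term_nonneg γ₁ p) (fun p _ => term_nonneg γ₂ p) ht

-- `β = t α + (1 - t) 1` and `α = t' β + (1 - t') 0`, where `T_1 = T_0 = 1`.
theorem chernoffCoeff_interpolate (hπ : ∀ x, 0 ≤ π x) (hπ1 : ∑ x, π x = 1) (hM : IsTransMat M)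
    (hL : IsTransMat L) (hα : 0 < α) (hαβ : α < β) (hβ : β < 1) :
    chernoffCoeff π β M L ≤ chernoffCoeff π α M L ^ ((1 - β) / (1 - α)) ∧
      chernoffCoeff π α M L ≤ chernoffCoeff π β M L ^ (α / β) := by
  have hα1 : 0 < 1 - α := by linarith
  have hβ0 : 0 < β := hα.trans hαβ
  constructor
  · have h := chernoffCoeff_le_rpow_mul_rpow hπ hM.1 hL.1
      (γ₁ := α) (γ₂ := 1) (t := (1 - β) / (1 - α))
      ⟨div_pos (by linarith) hα1, (div_lt_one hα1).2 (by linarith)⟩ ⟨hβ0, hβ⟩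
      (by field_simp; ring)
    rwa [chernoffCoeff_one hπ1 hM, Real.one_rpow, mul_one] at h
  · have h := chernoffCoeff_le_rpow_mul_rpow hπ hM.1 hL.1
      (γ₁ := β) (γ₂ := 0) (t := α / β)
      ⟨div_pos hα hβ0, (div_lt_one hβ0).2 hαβ⟩ ⟨hα, by linarith⟩ (by field_simp; ring)
    rwa [chernoffCoeff_zero hπ1 hL, Real.one_rpow, mul_one] at h

theorem chernoffCoeff_le_chernoffCoeff_matMul (hπ : ∀ x, 0 ≤ π x) (hM : ∀ x y, 0 ≤ M x y)
    (hL : ∀ x y, 0 ≤ L x y) (hP : IsTransMat P) (hγ : γ ∈ Set.Ioo 0 1) :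
    chernoffCoeff π γ M L ≤ chernoffCoeff π γ (matMul M P) (matMul L P) := by
  refine sum_le_sum fun x _ => mul_le_mul_of_nonneg_left ?_ (hπ x)
  have factor : ∀ z y, (M x z * P z y) ^ γ * (L x z * P z y) ^ (1 - γ) =
      M x z ^ γ * L x z ^ (1 - γ) * P z y := fun z y => by
    rw [Real.mul_rpow (hM x z) (hP.1 z y), Real.mul_rpow (hL x z) (hP.1 z y), mul_mul_mul_comm,
      ← Real.rpow_add' (hP.1 z y) (by simp), add_sub_cancel, Real.rpow_one]
  calc ∑ z, M x z ^ γ * L x z ^ (1 - γ)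
      = ∑ y, ∑ z, (M x z * P z y) ^ γ * (L x z * P z y) ^ (1 - γ) := by
        simp only [factor]
        rw [sum_comm]
        simp only [← mul_sum, hP.2, mul_one]
    _ ≤ ∑ y, matMul M P x y ^ γ * matMul L P x y ^ (1 - γ) :=
        sum_le_sum fun y _ => Real.sum_rpow_mul_rpow_one_sub_le _
          (fun z _ => mul_nonneg (hM x z) (hP.1 z y)) (fun z _ => mul_nonneg (hL x z) (hP.1 z y)) hγ

theorem Dalpha_eq_chernoffCoeff (hM : ∀ x y, 0 ≤ M x y) (hL : ∀ x y, 0 ≤ L x y) (hγ : γ ≠ 1) :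
    Dalpha π γ M L = (chernoffCoeff π γ M L - 1) / (γ - 1) := by
  simp only [Dalpha, chernoffCoeff, mul_assoc,
    Real.mul_div_rpow_eq_rpow_mul_rpow_one_sub (hM _ _) (hL _ _) hγ, mul_sum]
  ring

theorem Ralpha_eq_neg_log_chernoffCoeff (hM : ∀ x y, 0 ≤ M x y) (hL : ∀ x y, 0 ≤ L x y)
    (hγ : γ ≠ 1) : Ralpha π γ M L = -Real.log (chernoffCoeff π γ M L) / (1 - γ) := by
  have hγ' : γ - 1 ≠ 0 := sub_ne_zero.2 hγ
  rw [Ralpha, Dalpha_eq_chernoffCoeff hM hL hγ, mul_div_cancel₀ _ hγ', add_sub_cancel,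
    ← neg_sub, div_neg]
  ring

theorem Dalpha_one_sub_swap (hM : ∀ x y, 0 ≤ M x y) (hL : ∀ x y, 0 ≤ L x y)
    (hγ : γ ∈ Set.Ioo 0 1) : Dalpha π (1 - γ) L M = (1 - γ) / γ * Dalpha π γ M L := by
  rw [Dalpha_eq_chernoffCoeff hL hM (by linarith [hγ.1]), chernoffCoeff_swap,
    Dalpha_eq_chernoffCoeff hM hL hγ.2.ne]
  have : γ - 1 ≠ 0 := by linarith [hγ.2]
  field_simp
  ring

theorem Ralpha_one_sub_swap (hM : ∀ x y, 0 ≤ M x y) (hL : ∀ x y, 0 ≤ L x y)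
    (hγ : γ ∈ Set.Ioo 0 1) : Ralpha π (1 - γ) L M = (1 - γ) / γ * Ralpha π γ M L := by
  rw [Ralpha_eq_neg_log_chernoffCoeff hL hM (by linarith [hγ.1]), chernoffCoeff_swap,
    Ralpha_eq_neg_log_chernoffCoeff hM hL hγ.2.ne, sub_sub_cancel]
  have : 1 - γ ≠ 0 := by linarith [hγ.2]
  field_simp

theorem Ralpha_nonneg (hπ : ∀ x, 0 ≤ π x) (hπ1 : ∑ x, π x = 1) (hM : IsTransMat M)
    (hL : IsTransMat L) (hγ : γ ∈ Set.Ioo 0 1) : 0 ≤ Ralpha π γ M L := by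
  rw [Ralpha_eq_neg_log_chernoffCoeff hM.1 hL.1 hγ.2.ne]
  exact div_nonneg (neg_nonneg.2 (Real.log_nonpos (chernoffCoeff_nonneg hπ hM.1 hL.1)
    (chernoffCoeff_le_one hπ hπ1 hM hL hγ))) (by linarith [hγ.2])

theorem Ralpha_matMul_le (hπ : ∀ x, 0 ≤ π x) (hM : IsTransMat M) (hL : IsTransMat L)
    (hP : IsTransMat P) (hγ : γ ∈ Set.Ioo 0 1) (hT : 0 < chernoffCoeff π γ M L) :
    Ralpha π γ (matMul M P) (matMul L P) ≤ Ralpha π γ M L := by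
  rw [Ralpha_eq_neg_log_chernoffCoeff (hM.matMul hP).1 (hL.matMul hP).1 hγ.2.ne,
    Ralpha_eq_neg_log_chernoffCoeff hM.1 hL.1 hγ.2.ne]
  exact div_le_div_of_nonneg_right (neg_le_neg (Real.log_le_log hT
    (chernoffCoeff_le_chernoffCoeff_matMul hπ hM.1 hL.1 hP hγ))) (by linarith [hγ.2])

theorem chernoffCoeff_pos_of_Ralpha_pos (hπ : ∀ x, 0 ≤ π x) (hM : ∀ x y, 0 ≤ M x y)
    (hL : ∀ x y, 0 ≤ L x y) (hγ : γ ≠ 1) (hR : 0 < Ralpha π γ M L) :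
    0 < chernoffCoeff π γ M L := by
  refine (chernoffCoeff_nonneg hπ hM hL).lt_of_ne fun h => hR.ne' ?_
  rw [Ralpha_eq_neg_log_chernoffCoeff hM hL hγ, ← h, Real.log_zero, neg_zero, zero_div]

theorem Ralpha_bounds_of_lt (hπ : ∀ x, 0 ≤ π x) (hπ1 : ∑ x, π x = 1) (hM : IsTransMat M)
    (hL : IsTransMat L) (hα : 0 < α) (hαβ : α < β) (hβ : β < 1) :
    α / β * ((1 - β) / (1 - α)) * Ralpha π β M L ≤ Ralpha π α M L ∧
      Ralpha π α M L ≤ Ralpha π β M L := by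
  have hβ0 : 0 < β := hα.trans hαβ
  have hα1 : 0 < 1 - α := by linarith
  have hβ1 : 0 < 1 - β := by linarith
  obtain ⟨hTβ_le, hTα_le⟩ := chernoffCoeff_interpolate hπ hπ1 hM hL hα hαβ hβ
  rw [Ralpha_eq_neg_log_chernoffCoeff hM.1 hL.1 (hαβ.trans hβ).ne,
    Ralpha_eq_neg_log_chernoffCoeff hM.1 hL.1 hβ.ne]
  set Tα := chernoffCoeff π α M L
  set Tβ := chernoffCoeff π β M L
  have hTα_nonneg : 0 ≤ Tα := chernoffCoeff_nonneg hπ hM.1 hL.1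
  have hTβ_nonneg : 0 ≤ Tβ := chernoffCoeff_nonneg hπ hM.1 hL.1
  have hsβ : (1 - β) / (1 - α) ≠ 0 := (div_pos hβ1 hα1).ne'
  have hsα : α / β ≠ 0 := (div_pos hα hβ0).ne'
  -- `T_α = 0 ↔ T_β = 0`, and then both divergences are `-log 0 / _ = 0`
  rcases hTα_nonneg.eq_or_lt with hTα | hTα
  · have hTβ : Tβ = 0 :=
      le_antisymm (by simpa [← hTα, Real.zero_rpow hsβ] using hTβ_le) hTβ_nonneg
    simp [← hTα, hTβ]
  have hTβ : 0 < Tβ := hTβ_nonneg.lt_of_ne fun h => hTα.ne' <|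
    le_antisymm (by simpa [← h, Real.zero_rpow hsα] using hTα_le) hTα.le
  have hlogβ : Real.log Tβ ≤ (1 - β) / (1 - α) * Real.log Tα := by
    rw [← Real.log_rpow hTα]; exact Real.log_le_log hTβ hTβ_le
  have hlogα : Real.log Tα ≤ α / β * Real.log Tβ := by
    rw [← Real.log_rpow hTβ]; exact Real.log_le_log hTα hTα_le
  constructor
  · calc α / β * ((1 - β) / (1 - α)) * (-Real.log Tβ / (1 - β))
        = -(α / β * Real.log Tβ) / (1 - α) := by field_simp
      _ ≤ -Real.log Tα / (1 - α) := by gcongr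
  · calc -Real.log Tα / (1 - α)
        = -((1 - β) / (1 - α) * Real.log Tα) / (1 - β) := by field_simp
      _ ≤ -Real.log Tβ / (1 - β) := by gcongr

-- `etaD π γ P` and `etaR π γ P` unfold to `sSup (ratioSet (Dalpha π γ) P)` and
-- `sSup (ratioSet (Ralpha π γ) P)`.
def ratioSet (d : (X → X → ℝ) → (X → X → ℝ) → ℝ) (P : X → X → ℝ) : Set ℝ :=
  {r | ∃ M L : X → X → ℝ, IsTransMat M ∧ IsTransMat L ∧ M ≠ L ∧ 0 < d M L ∧
    r = d (matMul M P) (matMul L P) / d M L}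

theorem ratioSet_eq_of_swap {d d' : (X → X → ℝ) → (X → X → ℝ) → ℝ} {c : ℝ}
    (hP : IsTransMat P) (hc : 0 < c)
    (h : ∀ M L, IsTransMat M → IsTransMat L → d' L M = c * d M L) :
    ratioSet d' P = ratioSet d P := by
  have ratio_eq : ∀ M L, IsTransMat M → IsTransMat L →
      d' (matMul L P) (matMul M P) / d' L M = d (matMul M P) (matMul L P) / d M L :=
    fun M L hM hL => by
      rw [h M L hM hL, h _ _ (hM.matMul hP) (hL.matMul hP), mul_div_mul_left _ _ hc.ne']
  ext r
  constructor
  · rintro ⟨M, L, hM, hL, hne, hpos, rfl⟩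
    rw [h L M hL hM] at hpos
    exact ⟨L, M, hL, hM, hne.symm, pos_of_mul_pos_right hpos hc.le, ratio_eq L M hL hM⟩
  · rintro ⟨M, L, hM, hL, hne, hpos, rfl⟩
    exact ⟨L, M, hL, hM, hne.symm, by rw [h M L hM hL]; positivity, (ratio_eq M L hM hL).symm⟩

theorem etaD_one_sub (hP : IsTransMat P) (hγ : γ ∈ Set.Ioo 0 1) :
    etaD π (1 - γ) P = etaD π γ P :=
  congrArg sSup <| ratioSet_eq_of_swap hP (div_pos (sub_pos.2 hγ.2) hγ.1)
    fun _ _ hM hL => Dalpha_one_sub_swap hM.1 hL.1 hγ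

theorem etaR_one_sub (hP : IsTransMat P) (hγ : γ ∈ Set.Ioo 0 1) :
    etaR π (1 - γ) P = etaR π γ P :=
  congrArg sSup <| ratioSet_eq_of_swap hP (div_pos (sub_pos.2 hγ.2) hγ.1)
    fun _ _ hM hL => Ralpha_one_sub_swap hM.1 hL.1 hγ

theorem ratioSet_Ralpha_subset_Icc (hπ : ∀ x, 0 ≤ π x) (hπ1 : ∑ x, π x = 1) (hP : IsTransMat P)
    (hγ : γ ∈ Set.Ioo 0 1) : ratioSet (Ralpha π γ) P ⊆ Set.Icc 0 1 := by
  rintro r ⟨M, L, hM, hL, -, hpos, rfl⟩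
  have hT := chernoffCoeff_pos_of_Ralpha_pos hπ hM.1 hL.1 hγ.2.ne hpos
  exact ⟨div_nonneg (Ralpha_nonneg hπ hπ1 (hM.matMul hP) (hL.matMul hP) hγ) hpos.le,
    (div_le_one hpos).2 (Ralpha_matMul_le hπ hM hL hP hγ hT)⟩

theorem Real.sSup_le_mul_sSup {S T : Set ℝ} {c : ℝ} (hc : 0 ≤ c) (hT : BddAbove T)
    (hT₀ : ∀ t ∈ T, 0 ≤ t) (h : ∀ s ∈ S, ∃ t ∈ T, s ≤ c * t) : sSup S ≤ c * sSup T := by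
  rcases S.eq_empty_or_nonempty with rfl | hS
  · rw [Real.sSup_empty]
    exact mul_nonneg hc (Real.sSup_nonneg hT₀)
  refine csSup_le hS fun s hs => ?_
  obtain ⟨t, ht, hst⟩ := h s hs
  exact hst.trans (mul_le_mul_of_nonneg_left (le_csSup hT ht) hc)

theorem ratioSet_nonneg {d : (X → X → ℝ) → (X → X → ℝ) → ℝ} (hP : IsTransMat P)
    (hd : ∀ M L, IsTransMat M → IsTransMat L → 0 ≤ d M L) : ∀ r ∈ ratioSet d P, 0 ≤ r := by
  rintro r ⟨M, L, hM, hL, -, hpos, rfl⟩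
  exact div_nonneg (hd _ _ (hM.matMul hP) (hL.matMul hP)) hpos.le

theorem sSup_ratioSet_bounds {d₁ d₂ : (X → X → ℝ) → (X → X → ℝ) → ℝ} {c : ℝ}
    (hP : IsTransMat P) (hc : 0 < c)
    (hd : ∀ M L, IsTransMat M → IsTransMat L →
      0 ≤ d₁ M L ∧ c * d₂ M L ≤ d₁ M L ∧ d₁ M L ≤ d₂ M L)
    (hbdd₁ : BddAbove (ratioSet d₁ P)) (hbdd₂ : BddAbove (ratioSet d₂ P)) :
    c * sSup (ratioSet d₂ P) ≤ sSup (ratioSet d₁ P) ∧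
      sSup (ratioSet d₁ P) ≤ c⁻¹ * sSup (ratioSet d₂ P) := by
  have nonneg₁ := ratioSet_nonneg hP fun M L hM hL => (hd M L hM hL).1
  have nonneg₂ := ratioSet_nonneg hP fun M L hM hL => (hd M L hM hL).1.trans (hd M L hM hL).2.2
  constructor
  · refine (le_inv_mul_iff₀ hc).1 <| Real.sSup_le_mul_sSup (inv_nonneg.2 hc.le) hbdd₁ nonneg₁ ?_
    rintro r ⟨M, L, hM, hL, hne, hpos, rfl⟩
    obtain ⟨-, hc₂₁, h₁₂⟩ := hd M L hM hL
    obtain ⟨h₀', hc₂₁', -⟩ := hd _ _ (hM.matMul hP) (hL.matMul hP)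
    have hpos₁ : 0 < d₁ M L := (mul_pos hc hpos).trans_le hc₂₁
    refine ⟨_, ⟨M, L, hM, hL, hne, hpos₁, rfl⟩, ?_⟩
    rw [← mul_div_assoc]
    exact div_le_div₀ (by positivity) ((le_inv_mul_iff₀ hc).2 hc₂₁') hpos₁ h₁₂
  · refine Real.sSup_le_mul_sSup (inv_nonneg.2 hc.le) hbdd₂ nonneg₂ ?_
    rintro r ⟨M, L, hM, hL, hne, hpos, rfl⟩
    obtain ⟨-, hc₂₁, h₁₂⟩ := hd M L hM hL
    obtain ⟨h₀', -, h₁₂'⟩ := hd _ _ (hM.matMul hP) (hL.matMul hP)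
    have hpos₂ : 0 < d₂ M L := hpos.trans_le h₁₂
    refine ⟨_, ⟨M, L, hM, hL, hne, hpos₂, rfl⟩, ?_⟩
    calc d₁ (matMul M P) (matMul L P) / d₁ M L
        ≤ d₂ (matMul M P) (matMul L P) / (c * d₂ M L) :=
          div_le_div₀ (h₀'.trans h₁₂') h₁₂' (by positivity) hc₂₁
      _ = c⁻¹ * (d₂ (matMul M P) (matMul L P) / d₂ M L) := by field_simp

end

theorem stmt15_general {X : Type*} [Fintype X]
    (π : X → ℝ) (hπ : ∀ x, 0 < π x) (hπ1 : ∑ x, π x = 1)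
    (P : X → X → ℝ) (hP : IsTransMat P) :
    (∀ α ∈ Set.Ioo (0 : ℝ) 1,
      etaR π α P = etaR π (1 - α) P ∧ etaD π α P = etaD π (1 - α) P) ∧
    (∀ α β : ℝ, 0 < α → α < β → β < 1 →
      α / β * ((1 - β) / (1 - α)) * etaR π β P ≤ etaR π α P ∧
      etaR π α P ≤ β / α * ((1 - α) / (1 - β)) * etaR π β P) := by
  have hπ₀ : ∀ x, 0 ≤ π x := fun x => (hπ x).le
  refine ⟨fun α hα => ⟨(etaR_one_sub hP hα).symm, (etaD_one_sub hP hα).symm⟩,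
    fun α β hα hαβ hβ => ?_⟩
  have bdd : ∀ γ ∈ Set.Ioo (0 : ℝ) 1, BddAbove (ratioSet (Ralpha π γ) P) :=
    fun γ hγ => bddAbove_Icc.mono (ratioSet_Ralpha_subset_Icc hπ₀ hπ1 hP hγ)
  have hβ₀ : 0 < β := hα.trans hαβ
  obtain ⟨lower, upper⟩ := sSup_ratioSet_bounds hP
    (mul_pos (div_pos hα hβ₀) (div_pos (sub_pos.2 hβ) (sub_pos.2 (hαβ.trans hβ))))
    (fun M L hM hL => ⟨Ralpha_nonneg hπ₀ hπ1 hM hL ⟨hα, hαβ.trans hβ⟩,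
      Ralpha_bounds_of_lt hπ₀ hπ1 hM hL hα hαβ hβ⟩)
    (bdd α ⟨hα, hαβ.trans hβ⟩) (bdd β ⟨hβ₀, hβ⟩)
  rw [mul_inv, inv_div, inv_div] at upper
  exact ⟨lower, upper⟩

/-- Symmetry and equivalence of the ergodicity coefficients for orders in `(0,1)`. -/
theorem stmt15 {X : Type*} [Fintype X] [Nonempty X]
    (π : X → ℝ) (hπ : ∀ x, 0 < π x) (hπ1 : ∑ x, π x = 1)
    (P : X → X → ℝ) (hP : IsTransMat P) :
    (∀ α ∈ Set.Ioo (0 : ℝ) 1,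
      etaR π α P = etaR π (1 - α) P ∧ etaD π α P = etaD π (1 - α) P) ∧
    (∀ α β : ℝ, 0 < α → α < β → β < 1 →
      α / β * ((1 - β) / (1 - α)) * etaR π β P ≤ etaR π α P ∧
      etaR π α P ≤ β / α * ((1 - α) / (1 - β)) * etaR π β P) :=
  stmt15_general π hπ hπ1 P hP
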